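/- arXiv:0705.1440 — 3 statements merged into one kernel-verified Lean document; each statement's English description precedes it below -/
import Mathlib

section
/- Let (X,d,δ) be a dilatation structure. Then for all x ∈ X, all u, v ∈ X with d(x,u) ≤ 1 and d(x,v) ≤ 1, and all μ ∈ Γ with ν(μ) ≤ 1, the limit distance d^x has the cone property with respect to dilatations: d^x(u,v) = (1/ν(μ)) d^x(δ_μ^x u, δ_μ^x v). -/
open Metric Set

/-- A dilatation structure `(X,d,δ)` in the sense of Buliga.  `Γ` is a separated
commutative topological group endowed with a continuous morphism `ν : Γ → (0,∞)`
with `inf ν(Γ) = 0`.  For every point `x` and every `ε ∈ Γ` with `ν ε ≤ 1` the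
dilatation `δ ε x` is a homeomorphism from an open neighbourhood `U x` of `x`
onto an open neighbourhood `V ε x` of `x`, subject to the axioms A0–A3. -/
structure DilatationStructure (Γ : Type*) [CommGroup Γ] [TopologicalSpace Γ]
    (X : Type*) [MetricSpace X] where
  /-- the morphism `ν : Γ → (0,∞)` -/
  ν : Γ → ℝ
  ν_pos : ∀ ε, 0 < ν ε
  ν_mul : ∀ ε μ, ν (ε * μ) = ν ε * ν μ
  ν_cont : Continuous ν
  ν_inf : ∀ a : ℝ, 0 < a → ∃ ε, ν ε < a
  /-- the dilatations: `δ ε x y` is `δ_ε^x y` -/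
  δ : Γ → X → X → X
  U : X → Set X
  V : Γ → X → Set X
  W : Γ → X → Set X
  rA : ℝ
  rB : ℝ
  one_lt_rB : 1 < rB
  rB_le_rA : rB ≤ rA
  U_open : ∀ x, IsOpen (U x)
  U_mem : ∀ x, x ∈ U x
  V_open : ∀ ε x, ν ε ≤ 1 → IsOpen (V ε x)
  V_mem : ∀ ε x, ν ε ≤ 1 → x ∈ V ε x
  -- A0
  closedBall_subset_U : ∀ x, closedBall x rA ⊆ U x
  δ_homeo : ∀ ε x, ν ε ≤ 1 →
    ContinuousOn (δ ε x) (U x) ∧ BijOn (δ ε x) (U x) (V ε x) ∧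
      ContinuousOn (δ ε⁻¹ x) (V ε x)
  ball_subset_image : ∀ ε x, ν ε < 1 → ball x (ν ε) ⊆ δ ε x '' ball x rA
  image_subset_V : ∀ ε x, ν ε < 1 → δ ε x '' ball x rA ⊆ V ε x
  V_subset_U : ∀ ε x, ν ε ≤ 1 → V ε x ⊆ U x
  W_nhds : ∀ ε x, 1 < ν ε → W ε x ∈ nhds x
  V_subset_W : ∀ ε x, ν ε < 1 → V ε x ⊆ W ε⁻¹ x
  δ_injOn_W : ∀ ε x, 1 < ν ε → InjOn (δ ε x) (W ε x)
  δ_image_W : ∀ ε x, 1 < ν ε → δ ε x '' W ε x ⊆ ball x rB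
  δ_inv : ∀ ε x, ν ε ≤ 1 → ∀ u ∈ U x, δ ε⁻¹ x (δ ε x u) = u
  domain_tech : ∀ K : Set X, IsCompact K → ∃ R > 0, ∃ ε₀ ∈ Ioo (0:ℝ) 1,
    ∀ x ∈ K, ∀ u ∈ closedBall x R, ∀ v ∈ closedBall x R, ∀ ε : Γ, ν ε < ε₀ →
      δ ε x v ∈ W ε⁻¹ (δ ε x u)
  -- A1
  δ_base : ∀ ε x, ν ε ≤ 1 → δ ε x x = x
  δ_one : ∀ x y, δ 1 x y = y
  δ_cont : ContinuousOn (fun p : Γ × X × X => δ p.1 p.2.1 p.2.2)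
    {p : Γ × X × X | ν p.1 ≤ 1 ∧ p.2.2 ∈ U p.2.1}
  δ_tendsto_zero : ∀ x : X, ∀ y ∈ U x, ∀ η > 0, ∃ θ > 0, ∀ ε : Γ, ν ε < θ →
    dist (δ ε x y) x < η
  -- A2
  δ_comp : ∀ ε μ x, ν ε ≤ 1 → ν μ ≤ 1 → ∀ u ∈ closedBall x rA,
    δ ε x (δ μ x u) = δ (ε * μ) x u
  -- A3 : the limit distances `d^x`
  dx : X → X → X → ℝ
  dx_lim : ∀ K : Set X, IsCompact K → ∀ η > 0, ∃ θ > 0, ∀ ε : Γ, ν ε < θ →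
    ∀ x ∈ K, ∀ u ∈ closedBall x rA, ∀ v ∈ closedBall x rA,
      |(1 / ν ε) * dist (δ ε x u) (δ ε x v) - dx x u v| < η
  dx_nondegenerate : ∀ x : X, ∀ u ∈ closedBall x rA, ∀ v ∈ closedBall x rA,
    dx x u v = 0 → u = v

namespace DilatationStructure

variable {Γ : Type*} [CommGroup Γ] [TopologicalSpace Γ] {X : Type*} [MetricSpace X]

/-- the difference operation `Δ_ε^x(u,v) = δ_{ε⁻¹}^{δ_ε^x u} δ_ε^x v` -/
def difOp (D : DilatationStructure Γ X) (ε : Γ) (x u v : X) : X :=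
  D.δ ε⁻¹ (D.δ ε x u) (D.δ ε x v)

/-- the sum operation `Σ_ε^x(u,v) = δ_{ε⁻¹}^x δ_ε^{δ_ε^x u} v` -/
def sumOp (D : DilatationStructure Γ X) (ε : Γ) (x u v : X) : X :=
  D.δ ε⁻¹ x (D.δ ε (D.δ ε x u) v)

/-- the inverse operation `inv_ε^x(u) = δ_{ε⁻¹}^{δ_ε^x u} x` -/
def invOp (D : DilatationStructure Γ X) (ε : Γ) (x u : X) : X :=
  D.δ ε⁻¹ (D.δ ε x u) x

/-- A dilatation structure is linear if `δ_ε^x δ_μ^y z = δ_μ^{δ_ε^x y} δ_ε^x z`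
for sufficiently closed `x, y, z`. -/
def IsLinear (D : DilatationStructure Γ X) : Prop :=
  ∀ K : Set X, IsCompact K → ∃ C > 0, ∀ ε μ : Γ, D.ν ε ≤ 1 → D.ν μ ≤ 1 →
    ∀ x ∈ K, ∀ y ∈ K, ∀ z ∈ K,
      dist x y ≤ C → dist x z ≤ C → dist y z ≤ C →
        D.δ ε x (D.δ μ y z) = D.δ μ (D.δ ε x y) (D.δ ε x z)

/-- A transformation `A : X → X` is linear (w.r.t. a dilatation structure) if it is
Lipschitz and commutes with dilatations. -/
def IsLinearTransform (D : DilatationStructure Γ X) (A : X → X) : Prop :=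
  (∃ C : NNReal, LipschitzWith C A) ∧
  ∀ x : X, ∀ u ∈ D.U x, ∀ ε : Γ, D.ν ε < 1 → A u ∈ D.U (A x) →
    A (D.δ ε x u) = D.δ ε (A x) (A u)

end DilatationStructure

/-- A strong dilatation structure: a dilatation structure satisfying in addition
axiom A4, the uniform convergence of `Δ_ε^x(u,v)` (hence also of `Σ_ε^x(u,v)` and
`inv_ε^x(u)`) as `ε → 0`. -/
structure StrongDilatationStructure (Γ : Type*) [CommGroup Γ] [TopologicalSpace Γ]
    (X : Type*) [MetricSpace X] extends DilatationStructure Γ X where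
  /-- `Δ^x(u,v)` -/
  difLim : X → X → X → X
  /-- `Σ^x(u,v)` -/
  sumLim : X → X → X → X
  /-- `inv^x(u)` -/
  invLim : X → X → X
  dif_conv : ∀ K : Set X, IsCompact K → ∃ R > 0, ∀ η > 0, ∃ θ > 0, ∀ ε : Γ, ν ε < θ →
    ∀ x ∈ K, ∀ u ∈ closedBall x R, ∀ v ∈ closedBall x R,
      dist (δ ε⁻¹ (δ ε x u) (δ ε x v)) (difLim x u v) < η
  sum_conv : ∀ K : Set X, IsCompact K → ∃ R > 0, ∀ η > 0, ∃ θ > 0, ∀ ε : Γ, ν ε < θ →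
    ∀ x ∈ K, ∀ u ∈ closedBall x R, ∀ v ∈ closedBall x R,
      dist (δ ε⁻¹ x (δ ε (δ ε x u) v)) (sumLim x u v) < η
  inv_conv : ∀ K : Set X, IsCompact K → ∃ R > 0, ∀ η > 0, ∃ θ > 0, ∀ ε : Γ, ν ε < θ →
    ∀ x ∈ K, ∀ u ∈ closedBall x R,
      dist (δ ε⁻¹ (δ ε x u) x) (invLim x u) < η

variable {Γ : Type*} [CommGroup Γ] [TopologicalSpace Γ] {X : Type*} [MetricSpace X]

namespace DilatationStructure

open Filter Topology

variable (D : DilatationStructure Γ X)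

lemma ν_one : D.ν 1 = 1 := by
  have h := D.ν_mul 1 1
  rw [one_mul] at h
  nlinarith [D.ν_pos 1]

lemma ν_inv (ε : Γ) : D.ν ε⁻¹ = (D.ν ε)⁻¹ := by
  refine eq_inv_of_mul_eq_one_left ?_
  rw [← D.ν_mul, inv_mul_cancel, D.ν_one]

/-- `δ_μ^x u = δ_{ε⁻¹}^x δ_ε^x δ_μ^x u` for any `ν ε < 1`, and `δ_{ε⁻¹}^x` maps
`V_ε(x) ⊆ W_{ε⁻¹}(x)` into `B(x, rB)`. -/
lemma mapsTo_δ_ball_rB {μ : Γ} (hμ : D.ν μ ≤ 1) (x : X) :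
    MapsTo (D.δ μ x) (D.U x) (ball x D.rB) := by
  intro u hu
  obtain ⟨ε, hε⟩ := D.ν_inf 1 one_pos
  have hδu : D.δ μ x u ∈ D.U x := D.V_subset_U μ x hμ ((D.δ_homeo μ x hμ).2.1.mapsTo hu)
  have hW : D.δ ε x (D.δ μ x u) ∈ D.W ε⁻¹ x :=
    D.V_subset_W ε x hε ((D.δ_homeo ε x hε.le).2.1.mapsTo hδu)
  have hν : 1 < D.ν ε⁻¹ := by
    rw [D.ν_inv]
    exact one_lt_inv_iff₀.mpr ⟨D.ν_pos ε, hε⟩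
  simpa only [D.δ_inv ε x hε.le _ hδu] using D.δ_image_W ε⁻¹ x hν ⟨_, hW, rfl⟩

lemma mapsTo_δ_closedBall_rA {μ : Γ} (hμ : D.ν μ ≤ 1) (x : X) :
    MapsTo (D.δ μ x) (closedBall x D.rA) (closedBall x D.rA) := fun _ hu =>
  ball_subset_closedBall.trans (closedBall_subset_closedBall D.rB_le_rA)
    (D.mapsTo_δ_ball_rB hμ x (D.closedBall_subset_U x hu))

def scaleToZero : Filter Γ := comap D.ν (𝓝 0)

instance : NeBot D.scaleToZero := comap_neBot fun t ht => by
  obtain ⟨r, hr, hball⟩ := Metric.mem_nhds_iff.mp ht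
  obtain ⟨ε, hε⟩ := D.ν_inf r hr
  exact ⟨ε, hball (by simpa [abs_of_pos (D.ν_pos ε)] using hε)⟩

lemma eventually_ν_lt {θ : ℝ} (hθ : 0 < θ) : ∀ᶠ ε in D.scaleToZero, D.ν ε < θ :=
  tendsto_comap.eventually (Iio_mem_nhds hθ)

lemma tendsto_mul_right_scaleToZero (μ : Γ) :
    Tendsto (· * μ) D.scaleToZero D.scaleToZero := by
  refine tendsto_comap_iff.mpr ?_
  have h : Tendsto (fun ε => D.ν ε * D.ν μ) D.scaleToZero (𝓝 (0 * D.ν μ)) :=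
    tendsto_comap.mul_const _
  simpa only [Function.comp_def, D.ν_mul, zero_mul] using h

lemma tendsto_dx {x u v : X} (hu : u ∈ closedBall x D.rA) (hv : v ∈ closedBall x D.rA) :
    Tendsto (fun ε => 1 / D.ν ε * dist (D.δ ε x u) (D.δ ε x v)) D.scaleToZero
      (𝓝 (D.dx x u v)) := by
  refine Metric.tendsto_nhds.mpr fun η hη => ?_
  obtain ⟨θ, hθ, hlim⟩ := D.dx_lim {x} isCompact_singleton η hη
  filter_upwards [D.eventually_ν_lt hθ] with ε hε
  exact hlim ε hε x rfl u hu v hv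

/-- Both sides are limits of the same rescaled distances: `ε ↦ εμ` preserves `ν ε → 0`, and
`δ_{εμ}^x = δ_ε^x δ_μ^x` by A2. -/
lemma dx_δ_δ {x u v : X} (hu : u ∈ closedBall x D.rA) (hv : v ∈ closedBall x D.rA)
    {μ : Γ} (hμ : D.ν μ ≤ 1) :
    D.dx x (D.δ μ x u) (D.δ μ x v) = D.ν μ * D.dx x u v := by
  have hμu :=
    D.tendsto_dx (D.mapsTo_δ_closedBall_rA hμ x hu) (D.mapsTo_δ_closedBall_rA hμ x hv)
  have huv := (D.tendsto_dx hu hv).comp (D.tendsto_mul_right_scaleToZero μ)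
  have hrescale :
      (fun ε => D.ν μ * (1 / D.ν (ε * μ) * dist (D.δ (ε * μ) x u) (D.δ (ε * μ) x v)))
        =ᶠ[D.scaleToZero]
      fun ε => 1 / D.ν ε * dist (D.δ ε x (D.δ μ x u)) (D.δ ε x (D.δ μ x v)) := by
    filter_upwards [D.eventually_ν_lt one_pos] with ε hε
    rw [← D.δ_comp ε μ x hε.le hμ u hu, ← D.δ_comp ε μ x hε.le hμ v hv, D.ν_mul]
    field_simp [(D.ν_pos μ).ne']
  exact tendsto_nhds_unique (hμu.congr' hrescale.symm) (huv.const_mul (D.ν μ))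

end DilatationStructure

/-- **Theorem (tangent bundle), part (a): the cone property.**  For a dilatation structure
`(X,d,δ)`, all `x ∈ X`, all `u, v` with `d(x,u) ≤ 1`, `d(x,v) ≤ 1` and all `μ ∈ Γ` with
`ν μ ≤ 1`: `d^x(u,v) = (1/ν μ) d^x(δ_μ^x u, δ_μ^x v)`. -/
theorem dx_cone_property (D : DilatationStructure Γ X) :
    ∀ x u v : X, dist x u ≤ 1 → dist x v ≤ 1 → ∀ μ : Γ, D.ν μ ≤ 1 →
      D.dx x u v = (1 / D.ν μ) * D.dx x (D.δ μ x u) (D.δ μ x v) := by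
  intro x u v hu hv μ hμ
  have h1A : (1 : ℝ) ≤ D.rA := D.one_lt_rB.le.trans D.rB_le_rA
  have huA : u ∈ closedBall x D.rA := by rw [mem_closedBall, dist_comm]; linarith
  have hvA : v ∈ closedBall x D.rA := by rw [mem_closedBall, dist_comm]; linarith
  rw [D.dx_δ_δ huA hvA hμ, one_div, inv_mul_cancel_left₀ (D.ν_pos μ).ne']
end

section
/- Let (X,d,δ) be a dilatation structure. Then for every point x ∈ X the metric space (X,d) admits a metric tangent space at x; more precisely, lim_{ε→0} (1/ε) sup { |d(u,v) − d^x(u,v)| : d(x,u) ≤ ε, d(x,v) ≤ ε } = 0. -/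
open Metric Set

variable {Γ : Type*} [CommGroup Γ] [TopologicalSpace Γ] {X : Type*} [MetricSpace X]

namespace DilatationStructure

lemma ν_one' (D : DilatationStructure Γ X) : D.ν 1 = 1 := by
  have h := D.ν_mul 1 1
  have hp := D.ν_pos 1
  rw [one_mul] at h
  nlinarith

lemma ν_pow' (D : DilatationStructure Γ X) (γ : Γ) (n : ℕ) :
    D.ν (γ ^ n) = D.ν γ ^ n := by
  induction n with
  | zero => simpa using D.ν_one'
  | succ n ih => rw [pow_succ, pow_succ, D.ν_mul, ih]

/-- homogeneity of the limit distance `d^x`. -/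
lemma dx_homog (D : DilatationStructure Γ X) (x : X) (γ : Γ) (hγ1 : D.ν γ ≤ 1)
    (U V : X) (hU : U ∈ closedBall x D.rA) (hV : V ∈ closedBall x D.rA)
    (hu : D.δ γ x U ∈ closedBall x D.rA) (hv : D.δ γ x V ∈ closedBall x D.rA) :
    D.dx x (D.δ γ x U) (D.δ γ x V) = D.ν γ * D.dx x U V := by
  have hγpos := D.ν_pos γ
  set A : ℝ := D.dx x (D.δ γ x U) (D.δ γ x V) - D.ν γ * D.dx x U V with hA
  have key : ∀ s > (0:ℝ), |A| < s * (1 + D.ν γ) := by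
    intro s hs
    obtain ⟨θs, hθspos, hlim⟩ := D.dx_lim {x} isCompact_singleton s hs
    obtain ⟨μ, hμ⟩ := D.ν_inf (min 1 (min θs (θs / D.ν γ))) (by positivity)
    have hμpos := D.ν_pos μ
    have hμ1 : D.ν μ < 1 := lt_of_lt_of_le hμ (min_le_left _ _)
    have hμθ : D.ν μ < θs :=
      lt_of_lt_of_le hμ (le_trans (min_le_right _ _) (min_le_left _ _))
    have hμγθ : D.ν (μ * γ) < θs := by
      rw [D.ν_mul]
      have h' : D.ν μ < θs / D.ν γ :=
        lt_of_lt_of_le hμ (le_trans (min_le_right _ _) (min_le_right _ _))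
      calc D.ν μ * D.ν γ < (θs / D.ν γ) * D.ν γ :=
            mul_lt_mul_of_pos_right h' hγpos
        _ = θs := div_mul_cancel₀ _ (ne_of_gt hγpos)
    have h1 := hlim μ hμθ x rfl (D.δ γ x U) hu (D.δ γ x V) hv
    have h2 := hlim (μ * γ) hμγθ x rfl U hU V hV
    have hc1 : D.δ μ x (D.δ γ x U) = D.δ (μ * γ) x U :=
      D.δ_comp μ γ x hμ1.le hγ1 U hU
    have hc2 : D.δ μ x (D.δ γ x V) = D.δ (μ * γ) x V :=
      D.δ_comp μ γ x hμ1.le hγ1 V hV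
    rw [hc1, hc2] at h1
    set t : ℝ := (1 / D.ν (μ * γ)) * dist (D.δ (μ * γ) x U) (D.δ (μ * γ) x V) with ht
    have hμγpos := D.ν_pos (μ * γ)
    have hrw : (1 / D.ν μ) * dist (D.δ (μ * γ) x U) (D.δ (μ * γ) x V)
        = D.ν γ * t := by
      rw [ht, D.ν_mul]
      field_simp
    rw [hrw] at h1
    have e : A = (D.ν γ * t - D.ν γ * D.dx x U V)
        - (D.ν γ * t - D.dx x (D.δ γ x U) (D.δ γ x V)) := by ring
    calc |A| ≤ |D.ν γ * t - D.ν γ * D.dx x U V|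
          + |D.ν γ * t - D.dx x (D.δ γ x U) (D.δ γ x V)| := by
          rw [e]; exact abs_sub _ _
      _ = D.ν γ * |t - D.dx x U V|
          + |D.ν γ * t - D.dx x (D.δ γ x U) (D.δ γ x V)| := by
          rw [← mul_sub, abs_mul, abs_of_pos hγpos]
      _ < D.ν γ * s + s := by
          exact add_lt_add (mul_lt_mul_of_pos_left h2 hγpos) h1
      _ = s * (1 + D.ν γ) := by ring
  have hA0 : A = 0 := by
    by_contra h
    have habs : 0 < |A| := abs_pos.mpr h
    have hk := key (|A| / (2 * (1 + D.ν γ))) (by positivity)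
    have h1γ : 0 < 1 + D.ν γ := by positivity
    have heq : |A| / (2 * (1 + D.ν γ)) * (1 + D.ν γ) = |A| / 2 := by
      field_simp
    rw [heq] at hk
    linarith
  linarith [hA0, hA]

end DilatationStructure

/-- **Theorem (tangent bundle), part (b).**  A dilatation structure `(X,d,δ)` admits a
metric tangent space at every point `x ∈ X`; more precisely
`lim_{ε→0} (1/ε) sup { |d(u,v) − d^x(u,v)| : d(x,u) ≤ ε, d(x,v) ≤ ε } = 0`. -/
theorem metric_tangent_space (D : DilatationStructure Γ X) (x : X) :
    ∀ η > 0, ∃ θ > 0, ∀ ε : ℝ, 0 < ε → ε < θ →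
      ∀ u v : X, dist x u ≤ ε → dist x v ≤ ε →
        |dist u v - D.dx x u v| ≤ η * ε := by
  classical
  intro η hη
  obtain ⟨γ₀, hγ₀⟩ := D.ν_inf 1 one_pos
  set a : ℝ := D.ν γ₀ with ha
  have hapos : 0 < a := D.ν_pos γ₀
  have ha1 : a < 1 := hγ₀
  obtain ⟨θ₁, hθ₁pos, hlim⟩ := D.dx_lim {x} isCompact_singleton (η * a) (by positivity)
  refine ⟨min a (θ₁ * a), by positivity, ?_⟩
  intro ε hε hεθ u v hxu hxv
  have hεa : ε < a := lt_of_lt_of_le hεθ (min_le_left _ _)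
  have hεθ' : ε < θ₁ * a := lt_of_lt_of_le hεθ (min_le_right _ _)
  have hε1 : ε < 1 := hεa.trans ha1
  have hrA1 : (1:ℝ) < D.rA := lt_of_lt_of_le D.one_lt_rB D.rB_le_rA
  -- find the right power of γ₀
  have hex : ∃ m : ℕ, a ^ m ≤ ε := by
    obtain ⟨m, hm⟩ := exists_pow_lt_of_lt_one hε ha1
    exact ⟨m, hm.le⟩
  set m := Nat.find hex with hm
  have hmspec : a ^ m ≤ ε := Nat.find_spec hex
  have hm0 : m ≠ 0 := by
    intro h
    rw [h, pow_zero] at hmspec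
    linarith
  obtain ⟨n, hn⟩ : ∃ n, m = n + 1 := ⟨m - 1, (Nat.succ_pred_eq_of_ne_zero hm0).symm⟩
  have hnlt : ε < a ^ n := by
    have := Nat.find_min hex (m := n) (by omega)
    push_neg at this
    exact this
  set γ : Γ := γ₀ ^ n with hγdef
  have hνγ : D.ν γ = a ^ n := D.ν_pow' γ₀ n
  have hνγpos : 0 < D.ν γ := D.ν_pos γ
  have hνγε : ε < D.ν γ := hνγ ▸ hnlt
  have hνγle : D.ν γ ≤ ε / a := by
    rw [hνγ, le_div_iff₀ hapos]
    calc a ^ n * a = a ^ (n + 1) := by ring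
      _ = a ^ m := by rw [hn]
      _ ≤ ε := hmspec
  have hνγ1 : D.ν γ < 1 := by
    have : ε / a < 1 := (div_lt_one hapos).mpr hεa
    linarith
  -- u, v are in the image of the ball under δ γ x
  have hub : u ∈ ball x (D.ν γ) := by
    rw [mem_ball, dist_comm]; exact lt_of_le_of_lt hxu hνγε
  have hvb : v ∈ ball x (D.ν γ) := by
    rw [mem_ball, dist_comm]; exact lt_of_le_of_lt hxv hνγε
  obtain ⟨U, hUb, hUu⟩ := D.ball_subset_image γ x hνγ1 hub
  obtain ⟨V, hVb, hVv⟩ := D.ball_subset_image γ x hνγ1 hvb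
  have hUc : U ∈ closedBall x D.rA := ball_subset_closedBall hUb
  have hVc : V ∈ closedBall x D.rA := ball_subset_closedBall hVb
  have huc : u ∈ closedBall x D.rA := by
    rw [mem_closedBall, dist_comm]; linarith
  have hvc : v ∈ closedBall x D.rA := by
    rw [mem_closedBall, dist_comm]; linarith
  -- apply dx_lim at scale γ
  have hνγθ₁ : D.ν γ < θ₁ := by
    have : ε / a < θ₁ := by
      rw [div_lt_iff₀ hapos]; linarith
    linarith
  have hmain := hlim γ hνγθ₁ x rfl U hUc V hVc
  rw [hUu, hVv] at hmain
  -- homogeneity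
  have hhom : D.dx x u v = D.ν γ * D.dx x U V := by
    rw [← hUu, ← hVv]
    exact D.dx_homog x γ hνγ1.le U V hUc hVc (hUu ▸ huc) (hVv ▸ hvc)
  rw [hhom]
  have h' : D.ν γ * ((1 / D.ν γ) * dist u v - D.dx x U V)
      = dist u v - D.ν γ * D.dx x U V := by
    field_simp
  have hkey : |dist u v - D.ν γ * D.dx x U V|
      = D.ν γ * |(1 / D.ν γ) * dist u v - D.dx x U V| := by
    rw [← h', abs_mul, abs_of_pos hνγpos]
  rw [hkey]
  calc D.ν γ * |(1 / D.ν γ) * dist u v - D.dx x U V|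
      ≤ D.ν γ * (η * a) := le_of_lt (mul_lt_mul_of_pos_left hmain hνγpos)
    _ ≤ (ε / a) * (η * a) := by
        apply mul_le_mul_of_nonneg_right hνγle (by positivity)
    _ = η * ε := by field_simp
end

section
/- Let (X,d,δ) be a strong dilatation structure and A : X → X a linear transformation. Then A is uniformly differentiable with respect to the dilatation structure, and at every point x the derivative of A equals A itself; that is, lim_{ε→0} sup { (1/ν(ε)) d( A(δ_ε^x u), δ_ε^{A(x)} A(u) ) : d(x,u) ≤ ν(ε) } = 0, uniformly for x in compact sets, and the restriction of A is a conical group morphism from T_x X to T_{A(x)} X. -/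
open Metric Set

variable {Γ : Type*} [CommGroup Γ] [TopologicalSpace Γ] {X : Type*} [MetricSpace X]

section AuxLemmas

open Filter

namespace DilatationStructure

variable {Γ' : Type*} [CommGroup Γ'] [TopologicalSpace Γ'] {X' : Type*} [MetricSpace X']

lemma rA_pos (D : DilatationStructure Γ' X') : 0 < D.rA :=
  lt_trans one_pos (lt_of_lt_of_le D.one_lt_rB D.rB_le_rA)

lemma one_lt_rA (D : DilatationStructure Γ' X') : 1 < D.rA :=
  lt_of_lt_of_le D.one_lt_rB D.rB_le_rA

lemma delta_inv_fix (D : DilatationStructure Γ' X') {μ : Γ'} (hμ : D.ν μ ≤ 1) (x : X') :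
    D.δ μ⁻¹ x x = x := by
  have h := D.δ_inv μ x hμ x (D.U_mem x)
  rwa [D.δ_base μ x hμ] at h

lemma preimage_ball (D : DilatationStructure Γ' X') (μ : Γ') (hμ : D.ν μ < 1) (x w : X')
    (hw : dist w x < D.ν μ) : ∃ p, dist p x < D.rA ∧ w = D.δ μ x p := by
  obtain ⟨p, hp, hpw⟩ := D.ball_subset_image μ x hμ (mem_ball.mpr hw)
  exact ⟨p, mem_ball.mp hp, hpw.symm⟩

end DilatationStructure

lemma aux_dist_bound {t d s B η : ℝ} (ht : 0 < t) (h : |1 / t * d - s| < η) (hs : s ≤ B) :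
    d ≤ t * (B + η) := by
  have h1 := (abs_sub_lt_iff.mp h).1
  have h2 : 1 / t * d < B + η := by linarith
  have h3 : t * (1 / t * d) = d := by field_simp
  have h4 := mul_lt_mul_of_pos_left h2 ht
  rw [h3] at h4
  exact h4.le

lemma aux_dx_bound {t d s η : ℝ} (h : |1 / t * d - s| < η) : s ≤ 1 / t * d + η := by
  have := (abs_sub_lt_iff.mp h).2; linarith

namespace DilatationStructure

variable {Γ' : Type*} [CommGroup Γ'] [TopologicalSpace Γ'] {X' : Type*} [MetricSpace X']

/-- A linear transformation commutes with dilatations of *all* scales `ν ε ≤ 1`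
in a small neighbourhood of any point. -/
lemma linear_all (D : DilatationStructure Γ' X') {A : X' → X'} {L : NNReal}
    (hL : LipschitzWith L A)
    (hA2 : ∀ x : X', ∀ u ∈ D.U x, ∀ ε : Γ', D.ν ε < 1 → A u ∈ D.U (A x) →
      A (D.δ ε x u) = D.δ ε (A x) (A u)) (x : X') :
    ∃ C > 0, ∀ u : X', dist x u ≤ C → ∀ ε : Γ', D.ν ε ≤ 1 →
      A (D.δ ε x u) = D.δ ε (A x) (A u) := by
  have hrA := D.rA_pos
  have hLnn : (0:ℝ) ≤ L := L.coe_nonneg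
  have hL1 : (0:ℝ) < (L:ℝ) + 1 := by positivity
  set r₁ := D.rA / (2 * ((L:ℝ) + 1)) with hr₁def
  have hr₁eq : 2 * ((L:ℝ) + 1) * r₁ = D.rA := by
    rw [hr₁def]; field_simp
  have hr₁pos : 0 < r₁ := by rw [hr₁def]; positivity
  have hLr₁ : (L:ℝ) * r₁ ≤ D.rA := by nlinarith
  obtain ⟨μ₀, hμ₀⟩ := D.ν_inf 1 one_pos
  have hβpos := D.ν_pos μ₀
  -- continuity of the inverse dilatation at x
  have hcwa : ContinuousWithinAt (D.δ μ₀⁻¹ x) (D.V μ₀ x) x :=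
    (D.δ_homeo μ₀ x hμ₀.le).2.2 x (D.V_mem μ₀ x hμ₀.le)
  rw [Metric.continuousWithinAt_iff] at hcwa
  obtain ⟨ρ, hρpos, hρ⟩ := hcwa r₁ hr₁pos
  refine ⟨min (D.ν μ₀ / 2) (ρ / 2), lt_min (by positivity) (by positivity), ?_⟩
  intro u hu ε hε
  have hd1 : dist u x < D.ν μ₀ := by
    rw [dist_comm]
    exact lt_of_le_of_lt (le_trans hu (min_le_left _ _)) (half_lt_self hβpos)
  obtain ⟨p, hpA, hup⟩ := D.preimage_ball μ₀ hμ₀ x u hd1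
  have hpU : p ∈ D.U x := D.closedBall_subset_U x (mem_closedBall.mpr hpA.le)
  have huV : u ∈ D.V μ₀ x := D.image_subset_V μ₀ x hμ₀ ⟨p, mem_ball.mpr hpA, hup.symm⟩
  have hpinv : D.δ μ₀⁻¹ x u = p := by rw [hup]; exact D.δ_inv μ₀ x hμ₀.le p hpU
  have hpr : dist p x < r₁ := by
    have hd2 : dist u x < ρ := by
      rw [dist_comm]
      exact lt_of_le_of_lt (le_trans hu (min_le_right _ _)) (half_lt_self hρpos)
    have h2 := hρ huV hd2
    rwa [D.delta_inv_fix hμ₀.le x, hpinv] at h2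
  have hApU : A p ∈ D.U (A x) := by
    apply D.closedBall_subset_U (A x)
    apply mem_closedBall.mpr
    calc dist (A p) (A x) ≤ (L:ℝ) * dist p x := hL.dist_le_mul p x
    _ ≤ D.rA := by nlinarith [dist_nonneg (x := p) (y := x)]
  have hpc : p ∈ closedBall x D.rA := mem_closedBall.mpr hpA.le
  have hApc : A p ∈ closedBall (A x) D.rA := by
    apply mem_closedBall.mpr
    calc dist (A p) (A x) ≤ (L:ℝ) * dist p x := hL.dist_le_mul p x
    _ ≤ D.rA := by nlinarith [dist_nonneg (x := p) (y := x)]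
  have hνεμ : D.ν (ε * μ₀) < 1 := by
    rw [D.ν_mul]
    nlinarith [D.ν_pos ε]
  calc A (D.δ ε x u) = A (D.δ ε x (D.δ μ₀ x p)) := by rw [← hup]
  _ = A (D.δ (ε * μ₀) x p) := by rw [D.δ_comp ε μ₀ x hε hμ₀.le p hpc]
  _ = D.δ (ε * μ₀) (A x) (A p) := hA2 x p hpU (ε * μ₀) hνεμ hApU
  _ = D.δ ε (A x) (D.δ μ₀ (A x) (A p)) := (D.δ_comp ε μ₀ (A x) hε hμ₀.le (A p) hApc).symm
  _ = D.δ ε (A x) (A (D.δ μ₀ x p)) := by rw [hA2 x p hpU μ₀ hμ₀ hApU]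
  _ = D.δ ε (A x) (A u) := by rw [← hup]

end DilatationStructure

end AuxLemmas
section SumMorph

open Filter

variable {Γ' : Type*} [CommGroup Γ'] [TopologicalSpace Γ'] {X' : Type*} [MetricSpace X']

set_option maxHeartbeats 1000000 in
lemma StrongDilatationStructure.sum_morph (D : StrongDilatationStructure Γ' X')
    {A : X' → X'} {L : NNReal} (hL : LipschitzWith L A)
    (hA2 : ∀ x : X', ∀ u ∈ D.U x, ∀ ε : Γ', D.ν ε < 1 → A u ∈ D.U (A x) →
      A (D.δ ε x u) = D.δ ε (A x) (A u)) (x : X') :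
    ∃ C > 0, ∀ u v : X', dist x u ≤ C → dist x v ≤ C →
      A (D.sumLim x u v) = D.sumLim (A x) (A u) (A v) := by
  have hrA := D.toDilatationStructure.rA_pos
  have hLnn : (0:ℝ) ≤ L := L.coe_nonneg
  have hL1 : (0:ℝ) < (L:ℝ) + 1 := by positivity
  set r₁ := D.rA / (2 * ((L:ℝ) + 1)) with hr₁def
  have hr₁eq : 2 * ((L:ℝ) + 1) * r₁ = D.rA := by rw [hr₁def]; field_simp
  have hr₁pos : 0 < r₁ := by rw [hr₁def]; positivity
  have hprod : 0 ≤ (L:ℝ) * r₁ := mul_nonneg hLnn hr₁pos.le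
  have hr₁rA : r₁ ≤ D.rA := by linarith only [hr₁eq, hr₁pos, hprod]
  have h2r₁ : 2 * r₁ ≤ D.rA := by linarith only [hr₁eq, hr₁pos, hprod]
  have hLr₁ : (L:ℝ) * r₁ ≤ D.rA := by linarith only [hr₁eq, hr₁pos, hprod]
  have hL2r₁ : (L:ℝ) * (2 * r₁) ≤ D.rA := by linarith only [hr₁eq, hr₁pos, hprod]
  have hxc : x ∈ closedBall x D.rA := mem_closedBall_self hrA.le
  -- dx_lim on {x} with accuracy 1/4
  obtain ⟨θq, hθqpos, hθq⟩ := D.dx_lim {x} isCompact_singleton (1/4) (by norm_num)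
  -- the fixed small scale lam
  obtain ⟨lam, hlam⟩ := D.ν_inf (min r₁ (min θq 1)) (lt_min hr₁pos (lt_min hθqpos one_pos))
  have hτpos : 0 < D.ν lam := D.ν_pos lam
  have hτr₁ : D.ν lam ≤ r₁ := (lt_of_lt_of_le hlam (min_le_left _ _)).le
  have hτθq : D.ν lam < θq := lt_of_lt_of_le hlam (le_trans (min_le_right _ _) (min_le_left _ _))
  have hτ1 : D.ν lam < 1 := lt_of_lt_of_le hlam (le_trans (min_le_right _ _) (min_le_right _ _))
  have hτ16 : 0 < D.ν lam / 16 := by positivity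
  -- dx_lim on {x} with accuracy (ν lam)/16
  obtain ⟨θτ, hθτpos, hθτ⟩ := D.dx_lim {x} isCompact_singleton (D.ν lam / 16) hτ16
  -- a fixed dilatation e₁ used to verify smallness of dx near x
  obtain ⟨e₁, he₁⟩ := D.ν_inf (min θτ 1) (lt_min hθτpos one_pos)
  have he₁1 : D.ν e₁ < 1 := lt_of_lt_of_le he₁ (min_le_right _ _)
  have he₁θ : D.ν e₁ < θτ := lt_of_lt_of_le he₁ (min_le_left _ _)
  have he₁pos := D.ν_pos e₁
  have hconte : ContinuousWithinAt (D.δ e₁ x) (D.U x) x :=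
    (D.δ_homeo e₁ x he₁1.le).1 x (D.U_mem x)
  rw [Metric.continuousWithinAt_iff] at hconte
  obtain ⟨ρ, hρpos, hρ⟩ := hconte (D.ν e₁ * (D.ν lam / 16)) (by positivity)
  -- points near x have small dx-norm
  have hdxsmall : ∀ w : X', dist x w ≤ min (ρ / 2) D.rA → D.dx x w x ≤ D.ν lam / 8 := by
    intro w hw
    have hwrA : dist w x ≤ D.rA := by rw [dist_comm]; exact le_trans hw (min_le_right _ _)
    have hwU : w ∈ D.U x := D.closedBall_subset_U x (mem_closedBall.mpr hwrA)
    have hd := hρ hwU (show dist w x < ρ by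
      rw [dist_comm]; exact lt_of_le_of_lt (le_trans hw (min_le_left _ _)) (half_lt_self hρpos))
    rw [D.δ_base e₁ x he₁1.le] at hd
    have habs := hθτ e₁ he₁θ x (Set.mem_singleton x) w (mem_closedBall.mpr hwrA) x hxc
    rw [D.δ_base e₁ x he₁1.le] at habs
    have h2 := aux_dx_bound habs
    have h3 : 1 / D.ν e₁ * dist (D.δ e₁ x w) x < D.ν lam / 16 := by
      rw [one_div_mul_eq_div, div_lt_iff₀ he₁pos]
      calc dist (D.δ e₁ x w) x < D.ν e₁ * (D.ν lam / 16) := hd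
      _ = D.ν lam / 16 * D.ν e₁ := by ring
    linarith only [h2, h3]
  -- the sum convergence data
  obtain ⟨R, hRpos, hR⟩ := D.sum_conv {x} isCompact_singleton
  obtain ⟨R', hR'pos, hR'⟩ := D.sum_conv {A x} isCompact_singleton
  refine ⟨min (min (ρ / 2) r₁) (min R (R' / ((L:ℝ) + 1))),
    lt_min (lt_min (by positivity) hr₁pos) (lt_min hRpos (by positivity)), ?_⟩
  intro u v hu hv
  have hCρ : dist x u ≤ ρ / 2 := le_trans hu (le_trans (min_le_left _ _) (min_le_left _ _))
  have hCρv : dist x v ≤ ρ / 2 := le_trans hv (le_trans (min_le_left _ _) (min_le_left _ _))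
  have hCr₁ : dist x u ≤ r₁ := le_trans hu (le_trans (min_le_left _ _) (min_le_right _ _))
  have hCr₁v : dist x v ≤ r₁ := le_trans hv (le_trans (min_le_left _ _) (min_le_right _ _))
  have hCR : dist x u ≤ R := le_trans hu (le_trans (min_le_right _ _) (min_le_left _ _))
  have hCRv : dist x v ≤ R := le_trans hv (le_trans (min_le_right _ _) (min_le_left _ _))
  have hCR' : dist x u ≤ R' / ((L:ℝ) + 1) :=
    le_trans hu (le_trans (min_le_right _ _) (min_le_right _ _))
  have hCR'v : dist x v ≤ R' / ((L:ℝ) + 1) :=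
    le_trans hv (le_trans (min_le_right _ _) (min_le_right _ _))
  have hdxu : D.dx x u x ≤ D.ν lam / 8 := hdxsmall u (le_min hCρ (le_trans hCr₁ hr₁rA))
  have hdxv : D.dx x v x ≤ D.ν lam / 8 := hdxsmall v (le_min hCρv (le_trans hCr₁v hr₁rA))
  have huc : u ∈ closedBall x D.rA :=
    mem_closedBall.mpr (by rw [dist_comm]; exact le_trans hCr₁ hr₁rA)
  have hvc : v ∈ closedBall x D.rA :=
    mem_closedBall.mpr (by rw [dist_comm]; exact le_trans hCr₁v hr₁rA)
  have huU : u ∈ D.U x := D.closedBall_subset_U x huc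
  have hvU : v ∈ D.U x := D.closedBall_subset_U x hvc
  have hAuU : A u ∈ D.U (A x) := by
    apply D.closedBall_subset_U (A x)
    apply mem_closedBall.mpr
    calc dist (A u) (A x) ≤ (L:ℝ) * dist u x := hL.dist_le_mul u x
    _ ≤ (L:ℝ) * r₁ :=
        mul_le_mul_of_nonneg_left (by rw [dist_comm]; exact hCr₁) hLnn
    _ ≤ D.rA := hLr₁
  -- the sequence of scales
  have hseq : ∀ n : ℕ, ∃ e : Γ', D.ν e < 1 / ((n:ℝ) + 1) ∧
      dist (D.δ e x u) x < 1 / ((n:ℝ) + 1) := by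
    intro n
    have hpos : (0:ℝ) < 1 / ((n:ℝ) + 1) := by positivity
    obtain ⟨θ', hθ'pos, hθ'⟩ := D.δ_tendsto_zero x u huU (1 / ((n:ℝ) + 1)) hpos
    obtain ⟨e, he⟩ := D.ν_inf (min (1 / ((n:ℝ) + 1)) θ') (lt_min hpos hθ'pos)
    exact ⟨e, lt_of_lt_of_le he (min_le_left _ _), hθ' e (lt_of_lt_of_le he (min_le_right _ _))⟩
  choose es hes1 hes2 using hseq
  have hone : Tendsto (fun n : ℕ => 1 / ((n:ℝ) + 1)) atTop (nhds 0) :=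
    tendsto_one_div_add_atTop_nhds_zero_nat
  have hy : Tendsto (fun n => D.δ (es n) x u) atTop (nhds x) := by
    rw [tendsto_iff_dist_tendsto_zero]
    exact squeeze_zero (fun n => dist_nonneg) (fun n => (hes2 n).le) hone
  have hν0 : Tendsto (fun n => D.ν (es n)) atTop (nhds 0) :=
    squeeze_zero (fun n => (D.ν_pos _).le) (fun n => (hes1 n).le) hone
  have hKy : IsCompact (insert x (Set.range (fun n => D.δ (es n) x u))) :=
    hy.isCompact_insert_range
  obtain ⟨θK, hθKpos, hθK⟩ := D.dx_lim _ hKy (D.ν lam / 16) hτ16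
  have hymem : ∀ n, D.δ (es n) x u ∈ insert x (Set.range (fun n => D.δ (es n) x u)) :=
    fun n => Set.mem_insert_of_mem _ ⟨n, rfl⟩
  have hyr₁ : ∀ᶠ n in atTop, dist (D.δ (es n) x u) x < r₁ :=
    (tendsto_iff_dist_tendsto_zero.mp hy).eventually (gt_mem_nhds hr₁pos)
  have hvy : ∀ᶠ n in atTop, dist v (D.δ (es n) x u) ≤ D.rA := by
    filter_upwards [hyr₁] with n hn
    calc dist v (D.δ (es n) x u) ≤ dist v x + dist x (D.δ (es n) x u) := dist_triangle _ _ _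
    _ ≤ r₁ + r₁ := by
        rw [dist_comm v x, dist_comm x (D.δ (es n) x u)]
        exact add_le_add hCr₁v hn.le
    _ ≤ D.rA := by linarith only [h2r₁]
  -- pick the reference scale m
  have hmex : ∀ᶠ n in atTop, D.ν (es n) < min θK (min θτ 1) :=
    hν0.eventually (gt_mem_nhds (lt_min hθKpos (lt_min hθτpos one_pos)))
  obtain ⟨m, hm⟩ := hmex.exists
  have hm1 : D.ν (es m) < θK := lt_of_lt_of_le hm (min_le_left _ _)
  have hm2 : D.ν (es m) < θτ := lt_of_lt_of_le hm (le_trans (min_le_right _ _) (min_le_left _ _))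
  have hm3 : D.ν (es m) < 1 := lt_of_lt_of_le hm (le_trans (min_le_right _ _) (min_le_right _ _))
  have hapos := D.ν_pos (es m)
  -- continuity of δ (es m) at (x, v)
  have hvUy : ∀ᶠ n in atTop, v ∈ D.U (D.δ (es n) x u) := by
    filter_upwards [hvy] with n hn
    exact D.closedBall_subset_U _ (mem_closedBall.mpr hn)
  have hmemS : ((es m, (x, v)) : Γ' × X' × X') ∈
      {p : Γ' × X' × X' | D.ν p.1 ≤ 1 ∧ p.2.2 ∈ D.U p.2.1} := ⟨hm3.le, hvU⟩
  have hS : ∀ᶠ n in atTop, ((es m, (D.δ (es n) x u, v)) : Γ' × X' × X') ∈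
      {p : Γ' × X' × X' | D.ν p.1 ≤ 1 ∧ p.2.2 ∈ D.U p.2.1} := by
    filter_upwards [hvUy] with n hn
    exact ⟨hm3.le, hn⟩
  have htup : Tendsto (fun n => ((es m, (D.δ (es n) x u, v)) : Γ' × X' × X')) atTop
      (nhds (es m, (x, v))) :=
    tendsto_const_nhds.prodMk_nhds (hy.prodMk_nhds tendsto_const_nhds)
  have hg : Tendsto (fun n => D.δ (es m) (D.δ (es n) x u) v) atTop
      (nhds (D.δ (es m) x v)) := by
    have hc : Filter.Tendsto (fun p : Γ' × X' × X' => D.δ p.1 p.2.1 p.2.2)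
        (nhdsWithin (es m, (x, v)) {p : Γ' × X' × X' | D.ν p.1 ≤ 1 ∧ p.2.2 ∈ D.U p.2.1})
        (nhds (D.δ (es m) x v)) := D.δ_cont _ hmemS
    exact Filter.Tendsto.comp hc (tendsto_nhdsWithin_iff.mpr ⟨htup, hS⟩)
  -- bound the limit value
  have habsv := hθτ (es m) hm2 x (Set.mem_singleton x) v hvc x hxc
  rw [D.δ_base (es m) x hm3.le] at habsv
  have hwstar : dist (D.δ (es m) x v) x ≤ D.ν (es m) * (D.ν lam / 8 + D.ν lam / 16) :=
    aux_dist_bound hapos habsv hdxv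
  have hwstar2 : 1 / D.ν (es m) * dist (D.δ (es m) x v) x < D.ν lam / 4 := by
    rw [one_div_mul_eq_div, div_lt_iff₀ hapos]
    calc dist (D.δ (es m) x v) x ≤ D.ν (es m) * (D.ν lam / 8 + D.ν lam / 16) := hwstar
    _ < D.ν lam / 4 * D.ν (es m) := by
        have := mul_pos hτpos hapos
        linarith only [this]
  have hlim : Tendsto (fun n => 1 / D.ν (es m) *
      dist (D.δ (es m) (D.δ (es n) x u) v) (D.δ (es n) x u)) atTop
      (nhds (1 / D.ν (es m) * dist (D.δ (es m) x v) x)) :=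
    (hg.dist hy).const_mul _
  have hflt : ∀ᶠ n in atTop, 1 / D.ν (es m) *
      dist (D.δ (es m) (D.δ (es n) x u) v) (D.δ (es n) x u) < D.ν lam / 4 :=
    hlim.eventually_lt_const hwstar2
  -- eventual bound on dx at the moving base point
  have hdxy : ∀ᶠ n in atTop, D.dx (D.δ (es n) x u) v (D.δ (es n) x u) ≤ 5 * D.ν lam / 16 := by
    filter_upwards [hflt, hvy] with n h1 h2
    have habs := hθK (es m) hm1 (D.δ (es n) x u) (hymem n) v (mem_closedBall.mpr h2)
      (D.δ (es n) x u) (mem_closedBall_self hrA.le)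
    rw [D.δ_base (es m) _ hm3.le] at habs
    have := aux_dx_bound habs
    linarith only [this, h1]
  -- the main estimate
  have key : ∀ η : ℝ, 0 < η → dist (A (D.sumLim x u v)) (D.sumLim (A x) (A u) (A v)) ≤
      ((L:ℝ) + 1) * η := by
    intro η hη
    obtain ⟨θ₁, hθ₁pos, hθ₁⟩ := hR η hη
    obtain ⟨θ₂, hθ₂pos, hθ₂⟩ := hR' η hη
    have hevν : ∀ᶠ n in atTop, D.ν (es n) < min θK (min θτ (min θ₁ θ₂)) :=
      hν0.eventually (gt_mem_nhds (lt_min hθKpos (lt_min hθτpos (lt_min hθ₁pos hθ₂pos))))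
    obtain ⟨n, hn⟩ := (hevν.and (hyr₁.and (hvy.and hdxy))).exists
    obtain ⟨hnν, hn5, hn7, hn6⟩ := hn
    have hn1 : D.ν (es n) < θK := lt_of_lt_of_le hnν (min_le_left _ _)
    have hn2 : D.ν (es n) < θτ :=
      lt_of_lt_of_le hnν (le_trans (min_le_right _ _) (min_le_left _ _))
    have hn3 : D.ν (es n) < θ₁ := lt_of_lt_of_le hnν
      (le_trans (min_le_right _ _) (le_trans (min_le_right _ _) (min_le_left _ _)))
    have hn4 : D.ν (es n) < θ₂ := lt_of_lt_of_le hnν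
      (le_trans (min_le_right _ _) (le_trans (min_le_right _ _) (min_le_right _ _)))
    have htpos := D.ν_pos (es n)
    have ht1 : D.ν (es n) < 1 := by
      refine lt_of_lt_of_le (hes1 n) ?_
      rw [div_le_one (by positivity)]
      have : (0:ℝ) ≤ (n:ℝ) := Nat.cast_nonneg n
      linarith only [this]
    -- step 1 : dist (y n) x
    have habs1 := hθτ (es n) hn2 x (Set.mem_singleton x) u huc x hxc
    rw [D.δ_base (es n) x ht1.le] at habs1
    have hyx : dist (D.δ (es n) x u) x ≤ D.ν (es n) * (D.ν lam / 8 + D.ν lam / 16) :=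
      aux_dist_bound htpos habs1 hdxu
    -- step 2 : dist q (y n)
    have habs2 := hθK (es n) hn1 (D.δ (es n) x u) (hymem n) v (mem_closedBall.mpr hn7)
      (D.δ (es n) x u) (mem_closedBall_self hrA.le)
    rw [D.δ_base (es n) _ ht1.le] at habs2
    have hqy : dist (D.δ (es n) (D.δ (es n) x u) v) (D.δ (es n) x u) ≤
        D.ν (es n) * (5 * D.ν lam / 16 + D.ν lam / 16) :=
      aux_dist_bound htpos habs2 hn6
    -- step 3 : dist q x
    have hqx9 : dist (D.δ (es n) (D.δ (es n) x u) v) x ≤ D.ν (es n) * (9 * D.ν lam / 16) := by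
      calc dist (D.δ (es n) (D.δ (es n) x u) v) x ≤
          dist (D.δ (es n) (D.δ (es n) x u) v) (D.δ (es n) x u) + dist (D.δ (es n) x u) x :=
        dist_triangle _ _ _
      _ ≤ D.ν (es n) * (5 * D.ν lam / 16 + D.ν lam / 16) +
          D.ν (es n) * (D.ν lam / 8 + D.ν lam / 16) := add_le_add hqy hyx
      _ = D.ν (es n) * (9 * D.ν lam / 16) := by ring
    have hννel : D.ν (es n * lam) = D.ν (es n) * D.ν lam := D.ν_mul (es n) lam
    have hqx : dist (D.δ (es n) (D.δ (es n) x u) v) x < D.ν (es n * lam) := by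
      rw [hννel]
      calc dist (D.δ (es n) (D.δ (es n) x u) v) x ≤ D.ν (es n) * (9 * D.ν lam / 16) := hqx9
      _ < D.ν (es n) * D.ν lam := by
        have := mul_pos htpos hτpos
        linarith only [this]
    have hννel1 : D.ν (es n * lam) < 1 := by
      rw [hννel]
      have h1 := mul_lt_of_lt_one_left hτpos ht1
      linarith only [h1, hτ1]
    -- step 4 : preimage p
    obtain ⟨p, hpb, hqp⟩ := D.toDilatationStructure.preimage_ball (es n * lam) hννel1 x
      (D.δ (es n) (D.δ (es n) x u) v) hqx
    have hpc : p ∈ closedBall x D.rA := mem_closedBall.mpr hpb.le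
    -- step 5/6 : s := δ lam x p
    have hsq : D.δ (es n) x (D.δ lam x p) = D.δ (es n) (D.δ (es n) x u) v := by
      rw [D.δ_comp (es n) lam x ht1.le hτ1.le p hpc, ← hqp]
    have hsV : D.δ lam x p ∈ D.V lam x :=
      D.image_subset_V lam x hτ1 ⟨p, mem_ball.mpr hpb, rfl⟩
    have hsU : D.δ lam x p ∈ D.U x := D.V_subset_U lam x hτ1.le hsV
    have hsinv : D.δ (es n)⁻¹ x (D.δ (es n) (D.δ (es n) x u) v) = D.δ lam x p := by
      rw [← hsq]; exact D.δ_inv (es n) x ht1.le _ hsU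
    -- step 7 : dx x p x is bounded
    have hnτθ : D.ν (es n * lam) < θτ := by
      rw [hννel]
      calc D.ν (es n) * D.ν lam ≤ D.ν (es n) :=
        mul_le_of_le_one_right htpos.le hτ1.le
      _ < θτ := hn2
    have habs3 := hθτ (es n * lam) hnτθ x (Set.mem_singleton x) p hpc x hxc
    rw [D.δ_base (es n * lam) x hννel1.le, ← hqp] at habs3
    have hdxp : D.dx x p x ≤ 1 / D.ν (es n * lam) *
        dist (D.δ (es n) (D.δ (es n) x u) v) x + D.ν lam / 16 := aux_dx_bound habs3
    have hdxp' : D.dx x p x ≤ 11 / 16 := by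
      have hqd : 1 / D.ν (es n * lam) * dist (D.δ (es n) (D.δ (es n) x u) v) x ≤ 9 / 16 := by
        rw [one_div_mul_eq_div, div_le_iff₀ (by rw [hννel]; positivity)]
        calc dist (D.δ (es n) (D.δ (es n) x u) v) x ≤ D.ν (es n) * (9 * D.ν lam / 16) := hqx9
        _ = 9 / 16 * (D.ν (es n) * D.ν lam) := by ring
        _ = 9 / 16 * D.ν (es n * lam) := by rw [hννel]
      linarith only [hdxp, hqd, hτ1]
    -- step 8 : dist s x ≤ r₁
    have habs4 := hθq lam hτθq x (Set.mem_singleton x) p hpc x hxc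
    rw [D.δ_base lam x hτ1.le] at habs4
    have hsx : dist (D.δ lam x p) x ≤ D.ν lam * (11 / 16 + 1 / 4) :=
      aux_dist_bound hτpos habs4 hdxp'
    have hsxr : dist (D.δ lam x p) x ≤ r₁ := by linarith only [hsx, hτpos, hτr₁]
    -- step 9 : memberships
    have hAsU : A (D.δ lam x p) ∈ D.U (A x) := by
      apply D.closedBall_subset_U (A x)
      apply mem_closedBall.mpr
      calc dist (A (D.δ lam x p)) (A x) ≤ (L:ℝ) * dist (D.δ lam x p) x := hL.dist_le_mul _ _
      _ ≤ (L:ℝ) * r₁ := mul_le_mul_of_nonneg_left hsxr hLnn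
      _ ≤ D.rA := hLr₁
    have hvyc : dist v (D.δ (es n) x u) ≤ 2 * r₁ := by
      calc dist v (D.δ (es n) x u) ≤ dist v x + dist x (D.δ (es n) x u) := dist_triangle _ _ _
      _ ≤ r₁ + r₁ := by
          rw [dist_comm v x, dist_comm x (D.δ (es n) x u)]
          exact add_le_add hCr₁v hn5.le
      _ = 2 * r₁ := by ring
    have hvyU : v ∈ D.U (D.δ (es n) x u) :=
      D.closedBall_subset_U _ (mem_closedBall.mpr (le_trans hvyc h2r₁))
    have hAvU : A v ∈ D.U (A (D.δ (es n) x u)) := by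
      apply D.closedBall_subset_U _
      apply mem_closedBall.mpr
      calc dist (A v) (A (D.δ (es n) x u)) ≤ (L:ℝ) * dist v (D.δ (es n) x u) :=
        hL.dist_le_mul _ _
      _ ≤ (L:ℝ) * (2 * r₁) := mul_le_mul_of_nonneg_left hvyc hLnn
      _ ≤ D.rA := hL2r₁
    -- step 10-13 : the algebra
    have E1 : A (D.δ (es n) (D.δ (es n) x u) v) = D.δ (es n) (A x) (A (D.δ lam x p)) := by
      rw [← hsq]; exact hA2 x (D.δ lam x p) hsU (es n) ht1 hAsU
    have E2 : A (D.δ (es n) (D.δ (es n) x u) v) =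
        D.δ (es n) (A (D.δ (es n) x u)) (A v) := hA2 (D.δ (es n) x u) v hvyU (es n) ht1 hAvU
    have E3 : A (D.δ (es n) x u) = D.δ (es n) (A x) (A u) := hA2 x u huU (es n) ht1 hAuU
    have E4 : D.δ (es n)⁻¹ (A x) (D.δ (es n) (D.δ (es n) (A x) (A u)) (A v)) =
        A (D.δ lam x p) := by
      rw [← E3, ← E2, E1]
      exact D.δ_inv (es n) (A x) ht1.le _ hAsU
    -- step 15 : sum_conv on the source side
    have h15 := hθ₁ (es n) hn3 x (Set.mem_singleton x) u
      (mem_closedBall.mpr (by rw [dist_comm]; exact hCR)) v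
      (mem_closedBall.mpr (by rw [dist_comm]; exact hCRv))
    rw [hsinv] at h15
    -- step 16 : sum_conv on the target side
    have hAuR : A u ∈ closedBall (A x) R' := by
      apply mem_closedBall.mpr
      calc dist (A u) (A x) ≤ (L:ℝ) * dist u x := hL.dist_le_mul _ _
      _ ≤ (L:ℝ) * (R' / ((L:ℝ) + 1)) :=
          mul_le_mul_of_nonneg_left (by rw [dist_comm]; exact hCR') hLnn
      _ ≤ R' := by
          rw [← mul_div_assoc, div_le_iff₀ hL1]
          have h0 := mul_nonneg hR'pos.le hLnn
          linarith only [h0, hR'pos]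
    have hAvR : A v ∈ closedBall (A x) R' := by
      apply mem_closedBall.mpr
      calc dist (A v) (A x) ≤ (L:ℝ) * dist v x := hL.dist_le_mul _ _
      _ ≤ (L:ℝ) * (R' / ((L:ℝ) + 1)) :=
          mul_le_mul_of_nonneg_left (by rw [dist_comm]; exact hCR'v) hLnn
      _ ≤ R' := by
          rw [← mul_div_assoc, div_le_iff₀ hL1]
          have h0 := mul_nonneg hR'pos.le hLnn
          linarith only [h0, hR'pos]
    have h16 := hθ₂ (es n) hn4 (A x) (Set.mem_singleton (A x)) (A u) hAuR (A v) hAvR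
    rw [E4] at h16
    -- combine
    calc dist (A (D.sumLim x u v)) (D.sumLim (A x) (A u) (A v)) ≤
        dist (A (D.sumLim x u v)) (A (D.δ lam x p)) +
          dist (A (D.δ lam x p)) (D.sumLim (A x) (A u) (A v)) := dist_triangle _ _ _
    _ ≤ (L:ℝ) * dist (D.sumLim x u v) (D.δ lam x p) + η := by
        have ha := hL.dist_le_mul (D.sumLim x u v) (D.δ lam x p)
        have hb := h16.le
        linarith only [ha, hb]
    _ ≤ ((L:ℝ) + 1) * η := by
        have hd : dist (D.sumLim x u v) (D.δ lam x p) ≤ η := by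
          rw [dist_comm]; exact h15.le
        have hc := mul_le_mul_of_nonneg_left hd hLnn
        linarith only [hc]
  -- conclude
  by_contra hne
  have hpos : 0 < dist (A (D.sumLim x u v)) (D.sumLim (A x) (A u) (A v)) := dist_pos.mpr hne
  have h1 := key (dist (A (D.sumLim x u v)) (D.sumLim (A x) (A u) (A v)) / (2 * ((L:ℝ) + 1)))
    (by positivity)
  have h2 : ((L:ℝ) + 1) *
      (dist (A (D.sumLim x u v)) (D.sumLim (A x) (A u) (A v)) / (2 * ((L:ℝ) + 1))) =
      dist (A (D.sumLim x u v)) (D.sumLim (A x) (A u) (A v)) / 2 := by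
    field_simp
  rw [h2] at h1
  linarith only [h1, hpos]

end SumMorph
/-- **Proposition.**  Let `(X,d,δ)` be a strong dilatation structure and `A : X → X` a
linear transformation.  Then `A` is uniformly differentiable and its derivative at every
point `x` equals `A`:  `lim_{ε→0} sup { (1/ν ε) d(A(δ_ε^x u), δ_ε^{A x}(A u)) : d(x,u) ≤ ν ε } = 0`
uniformly for `x` in compact sets, and (the restriction of) `A` is a conical group morphism
from `T_x X` to `T_{A x} X`. -/
theorem linear_transform_uniformly_differentiable
    (D : StrongDilatationStructure Γ X) (A : X → X)
    (hA : D.toDilatationStructure.IsLinearTransform A) :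
    (∀ K : Set X, IsCompact K → ∀ η > 0, ∃ θ > 0, ∀ ε : Γ, D.ν ε < θ →
      ∀ x ∈ K, ∀ u : X, dist x u ≤ D.ν ε →
        (1 / D.ν ε) * dist (A (D.δ ε x u)) (D.δ ε (A x) (A u)) < η) ∧
    (∀ x : X, ∀ K : Set X, IsCompact K → ∃ C > 0, ∀ u ∈ K, ∀ v ∈ K,
      dist x u ≤ C → dist x v ≤ C → dist u v ≤ C →
        A (D.sumLim x u v) = D.sumLim (A x) (A u) (A v) ∧
        (∀ ε : Γ, D.ν ε ≤ 1 → A (D.δ ε x u) = D.δ ε (A x) (A u))) := by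
  obtain ⟨L, hL⟩ := hA.1
  have hA2 := hA.2
  have hrA : 0 < D.rA := D.toDilatationStructure.rA_pos
  have h1rA : 1 < D.rA := D.toDilatationStructure.one_lt_rA
  have hLnn : (0:ℝ) ≤ L := L.coe_nonneg
  have hL1 : (0:ℝ) < (L:ℝ) + 1 := by positivity
  constructor
  · intro K hK η hη
    refine ⟨min 1 (D.rA / ((L:ℝ) + 1)), lt_min one_pos (div_pos hrA hL1), ?_⟩
    intro ε hε x hx u hu
    have hε1 : D.ν ε < 1 := lt_of_lt_of_le hε (min_le_left _ _)
    have hεr : D.ν ε < D.rA / ((L:ℝ) + 1) := lt_of_lt_of_le hε (min_le_right _ _)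
    have huU : u ∈ D.U x := by
      apply D.closedBall_subset_U x
      apply mem_closedBall.mpr
      rw [dist_comm]
      calc dist x u ≤ D.ν ε := hu
      _ ≤ 1 := hε1.le
      _ ≤ D.rA := h1rA.le
    have hAuU : A u ∈ D.U (A x) := by
      apply D.closedBall_subset_U (A x)
      apply mem_closedBall.mpr
      have hdiv : ((L:ℝ) + 1) * (D.rA / ((L:ℝ) + 1)) = D.rA := by field_simp
      calc dist (A u) (A x) ≤ (L:ℝ) * dist u x := hL.dist_le_mul u x
      _ ≤ (L:ℝ) * (D.rA / ((L:ℝ) + 1)) := by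
          apply mul_le_mul_of_nonneg_left _ hLnn
          rw [dist_comm]
          exact le_trans hu hεr.le
      _ ≤ D.rA := by
          have h0 := div_nonneg hrA.le hL1.le
          linarith only [hdiv, h0]
    rw [hA2 x u huU ε hε1 hAuU, dist_self, mul_zero]
    exact hη
  · intro x K hK
    obtain ⟨C₁, hC₁pos, hC₁⟩ := D.toDilatationStructure.linear_all hL hA2 x
    obtain ⟨C₂, hC₂pos, hC₂⟩ := D.sum_morph hL hA2 x
    refine ⟨min C₁ C₂, lt_min hC₁pos hC₂pos, ?_⟩
    intro u _ v _ h1 h2 _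
    refine ⟨hC₂ u v (le_trans h1 (min_le_right _ _)) (le_trans h2 (min_le_right _ _)), ?_⟩
    intro ε hε
    exact hC₁ u (le_trans h1 (min_le_left _ _)) ε hε
end
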